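/- For an integer n ≥ 2, let Q_n = {x ∈ ℝ^n : x ≥ 0, x_i + Σ_{j ∈ [n]\{i}} 2x_j ≥ 2 for all i ∈ [n]} and let c be the all-ones objective. Then inf{cᵀx : x ∈ 1𝒜(Q_n)} = inf{cᵀx : x ∈ 1𝒞(Q_n)} = 2n/(2n−1), while inf{cᵀx : x ∈ 𝒞(Q_n)} ≥ 2 and inf{cᵀx : x ∈ 𝒜(Q_n)} ≥ 2. Consequently, for every ε > 0 there is a covering polyhedron for which neither the 1-row aggregation closure is a (2−ε)-approximation of the aggregation closure nor the 1-row CG closure is a (2−ε)-approximation of the CG closure. -/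

import Mathlib

open Finset

/-- Dot product of two vectors in `ℝ^n`. -/
def dotp {n : ℕ} (c x : Fin n → ℝ) : ℝ := ∑ j, c j * x j

/-- A point of `ℝ^n` is integral if all its coordinates are integers. -/
def isIntPt {n : ℕ} (x : Fin n → ℝ) : Prop := ∀ j, ∃ z : ℤ, x j = (z : ℝ)

/-- The value `sup { cᵀ x : x ∈ S }`, in the extended reals. -/
noncomputable def supVal {n : ℕ} (c : Fin n → ℝ) (S : Set (Fin n → ℝ)) : EReal :=
  ⨆ x ∈ S, ((dotp c x : ℝ) : EReal)

/-- The value `inf { cᵀ x : x ∈ S }`, in the extended reals. -/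
noncomputable def infVal {n : ℕ} (c : Fin n → ℝ) (S : Set (Fin n → ℝ)) : EReal :=
  ⨅ x ∈ S, ((dotp c x : ℝ) : EReal)

/-- The polyhedron `{x ≥ 0 : A x ≤ b}`. -/
def packLP {n m : ℕ} (A : Matrix (Fin m) (Fin n) ℝ) (b : Fin m → ℝ) : Set (Fin n → ℝ) :=
  {x | (∀ j, 0 ≤ x j) ∧ ∀ i, dotp (A i) x ≤ b i}

/-- Aggregation closure of a packing polyhedron. -/
def aggP {n m : ℕ} (A : Matrix (Fin m) (Fin n) ℝ) (b : Fin m → ℝ) : Set (Fin n → ℝ) :=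
  ⋂ lam : {l : Fin m → ℝ // ∀ i, 0 ≤ l i},
    convexHull ℝ {x | (∀ j, 0 ≤ x j) ∧ isIntPt x ∧
      dotp (fun j => ∑ i, lam.1 i * A i j) x ≤ ∑ i, lam.1 i * b i}

/-- 1-row aggregation closure of a packing polyhedron. -/
def oneAggP {n m : ℕ} (A : Matrix (Fin m) (Fin n) ℝ) (b : Fin m → ℝ) : Set (Fin n → ℝ) :=
  ⋂ i : Fin m, convexHull ℝ {x | (∀ j, 0 ≤ x j) ∧ isIntPt x ∧ dotp (A i) x ≤ b i}

/-- Chvátal–Gomory closure of a set `P ⊆ ℝ^n`. -/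
def cgClosure {n : ℕ} (P : Set (Fin n → ℝ)) : Set (Fin n → ℝ) :=
  {x | ∀ (c : Fin n → ℤ) (δ : ℝ),
    (∀ y ∈ P, δ ≤ ∑ j, (c j : ℝ) * y j) → ((⌈δ⌉ : ℤ) : ℝ) ≤ ∑ j, (c j : ℝ) * x j}

/-- 1-row CG closure of a packing polyhedron. -/
def oneCGP {n m : ℕ} (A : Matrix (Fin m) (Fin n) ℝ) (b : Fin m → ℝ) : Set (Fin n → ℝ) :=
  ⋂ i : Fin m, cgClosure {x | (∀ j, 0 ≤ x j) ∧ dotp (A i) x ≤ b i}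

/-- Covering polyhedron with bounds `u j` on coordinates `j ∈ J` (coordinates outside `J`
are unbounded above). -/
def coverLP {n m : ℕ} (A : Matrix (Fin m) (Fin n) ℝ) (b : Fin m → ℝ)
    (J : Finset (Fin n)) (u : Fin n → ℝ) : Set (Fin n → ℝ) :=
  {x | (∀ j, 0 ≤ x j) ∧ (∀ j ∈ J, x j ≤ u j) ∧ ∀ i, b i ≤ dotp (A i) x}

/-- Aggregation closure of a covering polyhedron with bounds. -/
def aggC {n m : ℕ} (A : Matrix (Fin m) (Fin n) ℝ) (b : Fin m → ℝ)
    (J : Finset (Fin n)) (u : Fin n → ℝ) : Set (Fin n → ℝ) :=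
  ⋂ lam : {l : Fin m → ℝ // ∀ i, 0 ≤ l i},
    convexHull ℝ {x | (∀ j, 0 ≤ x j) ∧ isIntPt x ∧ (∀ j ∈ J, x j ≤ u j) ∧
      (∑ i, lam.1 i * b i) ≤ dotp (fun j => ∑ i, lam.1 i * A i j) x}

/-- 1-row aggregation closure of a covering polyhedron with bounds. -/
def oneAggC {n m : ℕ} (A : Matrix (Fin m) (Fin n) ℝ) (b : Fin m → ℝ)
    (J : Finset (Fin n)) (u : Fin n → ℝ) : Set (Fin n → ℝ) :=
  ⋂ i : Fin m, convexHull ℝ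
    {x | (∀ j, 0 ≤ x j) ∧ isIntPt x ∧ (∀ j ∈ J, x j ≤ u j) ∧ b i ≤ dotp (A i) x}

/-- 1-row CG closure of a covering polyhedron with bounds. -/
def oneCGC {n m : ℕ} (A : Matrix (Fin m) (Fin n) ℝ) (b : Fin m → ℝ)
    (J : Finset (Fin n)) (u : Fin n → ℝ) : Set (Fin n → ℝ) :=
  ⋂ i : Fin m, cgClosure {x | (∀ j, 0 ≤ x j) ∧ (∀ j ∈ J, x j ≤ u j) ∧ b i ≤ dotp (A i) x}

/-! In row `i` of `Q_n` the integer points `2 eᵢ` and `eⱼ` (`j ≠ i`) are tight, and their convex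
combination with weights proportional to the row coefficients is the constant point
`2/(2n-1) · 𝟙`, of value `2n/(2n-1)`; so this point lies in every 1-row closure. Each row is
itself a CG cut, and summing the rows gives `(2n-1) ∑ xⱼ ≥ 2n`: this bounds the 1-row closures
from below by the same value and, as `1 < 2n/(2n-1) ≤ 2`, makes `∑ xⱼ ≥ 2` a CG cut, which the
aggregation with all multipliers `1` also implies. The ratio `2 (2n-1)/(2n)` tends to `2`. -/

section General

variable {n : ℕ}

theorem isLinearMap_dotp (a : Fin n → ℝ) : IsLinearMap ℝ (dotp a) :=
  ⟨fun x y => by simp only [dotp, Pi.add_apply, mul_add, sum_add_distrib],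
    fun t x => by simp only [dotp, Pi.smul_apply, smul_eq_mul, mul_sum, mul_left_comm]⟩

theorem dotp_one_left (x : Fin n → ℝ) : dotp (fun _ => 1) x = ∑ j, x j := by
  simp only [dotp, one_mul]

theorem dotp_one_const (t : ℝ) : dotp (fun _ : Fin n => (1 : ℝ)) (fun _ => t) = n * t := by
  simp [dotp_one_left]

theorem dotp_single (a : Fin n → ℝ) (k : Fin n) (t : ℝ) : dotp a (Pi.single k t) = a k * t := by
  simp [dotp, Pi.single_apply]

theorem dotp_aggregate {m : ℕ} (l : Fin m → ℝ) (A : Matrix (Fin m) (Fin n) ℝ) (x : Fin n → ℝ) :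
    dotp (fun j => ∑ i, l i * A i j) x = ∑ i, l i * dotp (A i) x := by
  simp only [dotp, sum_mul, mul_sum, mul_assoc]
  exact sum_comm

theorem isIntPt_single (k : Fin n) {t : ℝ} (ht : ∃ z : ℤ, t = z) : isIntPt (Pi.single k t) := by
  obtain ⟨z, rfl⟩ := ht
  intro j
  by_cases hj : j = k
  · exact ⟨z, by simp [hj]⟩
  · exact ⟨0, by simp [hj]⟩

theorem infVal_anti {c : Fin n → ℝ} {S T : Set (Fin n → ℝ)} (h : S ⊆ T) :
    infVal c T ≤ infVal c S :=
  biInf_mono h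

theorem le_infVal {c : Fin n → ℝ} {S : Set (Fin n → ℝ)} {r : ℝ}
    (h : ∀ x ∈ S, r ≤ dotp c x) : (r : EReal) ≤ infVal c S :=
  le_iInf₂ fun x hx => EReal.coe_le_coe_iff.mpr (h x hx)

theorem infVal_le {c : Fin n → ℝ} {S : Set (Fin n → ℝ)} {x : Fin n → ℝ} (hx : x ∈ S) :
    infVal c S ≤ (dotp c x : EReal) :=
  iInf₂_le x hx

theorem const_mem_convexHull_range_single {ι : Type*} [Fintype ι] [DecidableEq ι] [Nonempty ι]
    {a : ι → ℝ} (ha : ∀ k, 0 < a k) (β : ℝ) :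
    (fun _ => β / ∑ k, a k) ∈ convexHull ℝ (Set.range fun k => Pi.single k (β / a k)) := by
  have hsum : 0 < ∑ k, a k := sum_pos (fun k _ => ha k) univ_nonempty
  have hcomb : (fun _ => β / ∑ k, a k) = ∑ k, (a k / ∑ k, a k) • Pi.single k (β / a k) := by
    ext l
    simp only [Finset.sum_apply, Pi.smul_apply, Pi.single_apply, smul_eq_mul, mul_ite, mul_zero,
      sum_ite_eq, mem_univ, if_true]
    field_simp [(ha l).ne']
  rw [hcomb]
  refine (convex_convexHull ℝ _).sum_mem (fun k _ => div_nonneg (ha k).le hsum.le) ?_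
    (fun k _ => subset_convexHull ℝ _ ⟨k, rfl⟩)
  rw [← sum_div, div_self hsum.ne']

end General

section ChvatalGomory

variable {n : ℕ}

theorem convex_cgClosure (P : Set (Fin n → ℝ)) : Convex ℝ (cgClosure P) := by
  have h : cgClosure P = ⋂ (c : Fin n → ℤ) (δ : ℝ) (_ : ∀ y ∈ P, δ ≤ dotp (fun j => (c j : ℝ)) y),
      {x | ((⌈δ⌉ : ℤ) : ℝ) ≤ dotp (fun j => (c j : ℝ)) x} := by
    ext x
    simp only [cgClosure, dotp, Set.mem_iInter, Set.mem_ofPred_eq]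
  rw [h]
  exact convex_iInter fun c => convex_iInter fun δ => convex_iInter fun _ =>
    convex_halfSpace_ge (isLinearMap_dotp _) _

theorem mem_cgClosure_of_isIntPt {P : Set (Fin n → ℝ)} {x : Fin n → ℝ} (hxP : x ∈ P)
    (hx : isIntPt x) : x ∈ cgClosure P := by
  intro c δ hδ
  choose z hz using hx
  have hint : ∑ j, (c j : ℝ) * x j = ((∑ j, c j * z j : ℤ) : ℝ) := by
    push_cast
    simp only [hz]
  rw [hint]
  exact_mod_cast Int.ceil_le.mpr (hint ▸ hδ x hxP)

theorem convexHull_subset_cgClosure {S P : Set (Fin n → ℝ)} (hSP : S ⊆ P)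
    (hS : ∀ x ∈ S, isIntPt x) : convexHull ℝ S ⊆ cgClosure P :=
  convexHull_min (fun x hx => mem_cgClosure_of_isIntPt (hSP hx) (hS x hx)) (convex_cgClosure P)

theorem ceil_le_dotp_of_mem_cgClosure {P : Set (Fin n → ℝ)} {a x : Fin n → ℝ} {δ : ℝ}
    (ha : isIntPt a) (hP : ∀ y ∈ P, δ ≤ dotp a y) (hx : x ∈ cgClosure P) :
    ((⌈δ⌉ : ℤ) : ℝ) ≤ dotp a x := by
  choose c hc using ha
  obtain rfl : a = fun j => (c j : ℝ) := funext hc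
  exact hx c δ hP

theorem oneAggC_subset_oneCGC {m : ℕ} (A : Matrix (Fin m) (Fin n) ℝ) (b : Fin m → ℝ)
    (J : Finset (Fin n)) (u : Fin n → ℝ) : oneAggC A b J u ⊆ oneCGC A b J u :=
  Set.iInter_mono fun _ =>
    convexHull_subset_cgClosure (fun _ ⟨h0, _, hJ, hb⟩ => ⟨h0, hJ, hb⟩) fun _ hx => hx.2.1

end ChvatalGomory

section QMatrix

-- `Q_N` is `coverLP (qMatrix N) (fun _ => 2) ∅ 0`.
def qMatrix (N : ℕ) : Matrix (Fin N) (Fin N) ℝ := fun i j => if i = j then 1 else 2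

variable {N : ℕ}

theorem two_mul_sub_one_pos (hN : 1 ≤ N) : (0 : ℝ) < 2 * N - 1 := by
  have : (1 : ℝ) ≤ N := by exact_mod_cast hN
  linarith

theorem isIntPt_qMatrix (i : Fin N) : isIntPt (qMatrix N i) :=
  fun j => ⟨if i = j then 1 else 2, by simp only [qMatrix]; split_ifs <;> norm_num⟩

theorem dotp_qMatrix (i : Fin N) (x : Fin N → ℝ) :
    dotp (qMatrix N i) x = 2 * dotp (fun _ => 1) x - x i := by
  calc dotp (qMatrix N i) x = ∑ j, (2 * x j - if i = j then x j else 0) :=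
        sum_congr rfl fun j _ => by simp only [qMatrix]; split_ifs <;> ring
    _ = 2 * dotp (fun _ => 1) x - x i := by
        simp only [sum_sub_distrib, sum_ite_eq, mem_univ, if_true, dotp_one_left, mul_sum]

theorem sum_dotp_qMatrix (x : Fin N → ℝ) :
    ∑ i, dotp (qMatrix N i) x = (2 * N - 1) * dotp (fun _ => 1) x := by
  simp only [dotp_qMatrix, sum_sub_distrib, sum_const, card_univ, Fintype.card_fin, nsmul_eq_mul,
    dotp_one_left]
  ring

theorem sum_qMatrix_row (i : Fin N) : ∑ k, qMatrix N i k = 2 * N - 1 := by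
  simpa [dotp] using dotp_qMatrix i (fun _ => 1)

theorem ceil_two_mul_div (hN : 1 ≤ N) : ⌈(2 * N / (2 * N - 1) : ℝ)⌉ = 2 := by
  have hpos := two_mul_sub_one_pos hN
  have : (1 : ℝ) ≤ N := by exact_mod_cast hN
  rw [Int.ceil_eq_iff, lt_div_iff₀ hpos, div_le_iff₀ hpos]
  constructor <;> push_cast <;> linarith

theorem two_mul_le_of_forall_two_le_dotp_qMatrix {x : Fin N → ℝ}
    (hx : ∀ i, 2 ≤ dotp (qMatrix N i) x) : 2 * N ≤ (2 * N - 1) * dotp (fun _ => 1) x := by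
  calc (2 * N : ℝ) = ∑ _i : Fin N, (2 : ℝ) := by simp [mul_comm]
    _ ≤ ∑ i, dotp (qMatrix N i) x := sum_le_sum fun i _ => hx i
    _ = (2 * N - 1) * dotp (fun _ => 1) x := sum_dotp_qMatrix x

theorem two_le_dotp_of_mem_cgClosure (hN : 1 ≤ N) {P : Set (Fin N → ℝ)} {x : Fin N → ℝ}
    (hP : ∀ y ∈ P, 2 * N ≤ (2 * N - 1) * dotp (fun _ => 1) y) (hx : x ∈ cgClosure P) :
    2 ≤ dotp (fun _ => 1) x := by
  have hcut := ceil_le_dotp_of_mem_cgClosure (δ := 2 * N / (2 * N - 1)) (fun _ => ⟨1, by simp⟩)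
    (fun y hy => (div_le_iff₀' (two_mul_sub_one_pos hN)).2 (hP y hy)) hx
  rwa [ceil_two_mul_div hN, Int.cast_ofNat] at hcut

theorem const_mem_oneAggC_qMatrix :
    (fun _ => (2 : ℝ) / (2 * N - 1)) ∈ oneAggC (qMatrix N) (fun _ => 2) ∅ 0 := by
  refine Set.mem_iInter.2 fun i => ?_
  have : Nonempty (Fin N) := ⟨i⟩
  have hrow_pos : ∀ k, 0 < qMatrix N i k := fun k => by
    simp only [qMatrix]; split_ifs <;> norm_num
  have hmem := const_mem_convexHull_range_single hrow_pos 2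
  rw [sum_qMatrix_row] at hmem
  refine convexHull_mono ?_ hmem
  rintro _ ⟨k, rfl⟩
  have hvertex : 0 ≤ 2 / qMatrix N i k := div_nonneg zero_le_two (hrow_pos k).le
  refine ⟨fun j => by simp only [Pi.single_apply]; split_ifs; exacts [hvertex, le_rfl],
    isIntPt_single k ⟨if i = k then 2 else 1, by simp only [qMatrix]; split_ifs <;> norm_num⟩,
    by simp, ?_⟩
  rw [dotp_single, mul_div_cancel₀ _ (hrow_pos k).ne']

theorem infVal_oneAggC_qMatrix_le :
    infVal (fun _ => 1) (oneAggC (qMatrix N) (fun _ => 2) ∅ 0)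
      ≤ ((2 * N / (2 * N - 1) : ℝ) : EReal) := by
  have h := infVal_le (c := fun _ => 1) (const_mem_oneAggC_qMatrix (N := N))
  rwa [dotp_one_const, ← mul_div_assoc, mul_comm (N : ℝ)] at h

theorem le_infVal_oneCGC_qMatrix (hN : 1 ≤ N) :
    ((2 * N / (2 * N - 1) : ℝ) : EReal)
      ≤ infVal (fun _ => 1) (oneCGC (qMatrix N) (fun _ => 2) ∅ 0) := by
  refine le_infVal fun x hx => (div_le_iff₀' (two_mul_sub_one_pos hN)).2 ?_
  refine two_mul_le_of_forall_two_le_dotp_qMatrix fun i => ?_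
  have hcut := ceil_le_dotp_of_mem_cgClosure (δ := 2) (isIntPt_qMatrix i) (fun y hy => hy.2.2)
    (Set.mem_iInter.1 hx i)
  rwa [Int.ceil_ofNat, Int.cast_ofNat] at hcut

theorem infVal_oneAggC_qMatrix (hN : 1 ≤ N) :
    infVal (fun _ => 1) (oneAggC (qMatrix N) (fun _ => 2) ∅ 0)
      = ((2 * N / (2 * N - 1) : ℝ) : EReal) :=
  infVal_oneAggC_qMatrix_le.antisymm
    ((le_infVal_oneCGC_qMatrix hN).trans (infVal_anti (oneAggC_subset_oneCGC _ _ _ _)))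

theorem infVal_oneCGC_qMatrix (hN : 1 ≤ N) :
    infVal (fun _ => 1) (oneCGC (qMatrix N) (fun _ => 2) ∅ 0)
      = ((2 * N / (2 * N - 1) : ℝ) : EReal) :=
  ((infVal_anti (oneAggC_subset_oneCGC _ _ _ _)).trans infVal_oneAggC_qMatrix_le).antisymm
    (le_infVal_oneCGC_qMatrix hN)

theorem two_le_infVal_cgClosure_qMatrix (hN : 1 ≤ N) :
    ((2 : ℝ) : EReal) ≤ infVal (fun _ => 1) (cgClosure (coverLP (qMatrix N) (fun _ => 2) ∅ 0)) :=
  le_infVal fun _ => two_le_dotp_of_mem_cgClosure hN fun _ hy =>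
    two_mul_le_of_forall_two_le_dotp_qMatrix hy.2.2

theorem two_le_infVal_aggC_qMatrix (hN : 1 ≤ N) :
    ((2 : ℝ) : EReal) ≤ infVal (fun _ => 1) (aggC (qMatrix N) (fun _ => 2) ∅ 0) := by
  refine le_infVal fun x hx => ?_
  have hx₁ := Set.mem_iInter.1 hx ⟨fun _ => 1, fun _ => zero_le_one⟩
  refine two_le_dotp_of_mem_cgClosure hN (fun y hy => ?_)
    (convexHull_subset_cgClosure subset_rfl (fun y hy => hy.2.1) hx₁)
  have hagg : ∑ _i : Fin N, (1 : ℝ) * 2 ≤ dotp (fun j => ∑ i, 1 * qMatrix N i j) y := hy.2.2.2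
  rw [dotp_aggregate] at hagg
  simpa [sum_dotp_qMatrix, mul_comm] using hagg

end QMatrix

theorem exists_two_sub_mul_lt_two {ε : ℝ} (hε : 0 < ε) :
    ∃ N : ℕ, 2 ≤ N ∧ (2 - ε) * (2 * N / (2 * N - 1)) < 2 := by
  obtain ⟨n, hn⟩ := exists_nat_gt ε⁻¹
  refine ⟨n + 2, by omega, ?_⟩
  have hpos := two_mul_sub_one_pos (N := n + 2) (by omega)
  have hεn : 1 < ε * (n + 2 : ℕ) := by
    rw [inv_lt_iff_one_lt_mul₀ hε] at hn
    push_cast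
    linarith
  rw [← mul_div_assoc, div_lt_iff₀ hpos]
  linarith

/-- For `n ≥ 2`, consider the covering polyhedron
`Q_n = {x ∈ ℝ^n_+ : x_i + ∑_{j ≠ i} 2 x_j ≥ 2, i ∈ [n]}` (no upper bounds, encoded with
`J = ∅`) and the all-ones objective.  Then the 1-row aggregation and 1-row CG closures
have value `2n/(2n-1)`, while the CG and aggregation closures have value at least `2`.
Consequently, for every `ε > 0` there is a covering polyhedron for which neither the
1-row aggregation closure is a `(2-ε)`-approximation of the aggregation closure, nor the
1-row CG closure is a `(2-ε)`-approximation of the CG closure. -/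
theorem stmt19 :
    (∀ N : ℕ, 2 ≤ N →
      infVal (fun _ : Fin N => (1 : ℝ))
          (oneAggC (fun i j : Fin N => if i = j then (1 : ℝ) else 2) (fun _ => 2) ∅ 0)
        = ((2 * N / (2 * N - 1) : ℝ) : EReal) ∧
      infVal (fun _ : Fin N => (1 : ℝ))
          (oneCGC (fun i j : Fin N => if i = j then (1 : ℝ) else 2) (fun _ => 2) ∅ 0)
        = ((2 * N / (2 * N - 1) : ℝ) : EReal) ∧
      ((2 : ℝ) : EReal)
        ≤ infVal (fun _ : Fin N => (1 : ℝ))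
            (cgClosure (coverLP (fun i j : Fin N => if i = j then (1 : ℝ) else 2)
              (fun _ => 2) ∅ 0)) ∧
      ((2 : ℝ) : EReal)
        ≤ infVal (fun _ : Fin N => (1 : ℝ))
            (aggC (fun i j : Fin N => if i = j then (1 : ℝ) else 2) (fun _ => 2) ∅ 0)) ∧
    (∀ ε : ℝ, 0 < ε →
      ∃ (n m : ℕ) (A : Matrix (Fin m) (Fin n) ℝ) (b : Fin m → ℝ),
        (∀ i j, 0 ≤ A i j) ∧ (∀ i, 0 ≤ b i) ∧
        (∀ i j, ∃ q : ℚ, A i j = (q : ℝ)) ∧ (∀ i, ∃ q : ℚ, b i = (q : ℝ)) ∧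
        ∃ c : Fin n → ℝ, (∀ j, 0 ≤ c j) ∧
          ((2 - ε : ℝ) : EReal) * infVal c (oneAggC A b ∅ 0) < infVal c (aggC A b ∅ 0) ∧
          ((2 - ε : ℝ) : EReal) * infVal c (oneCGC A b ∅ 0)
            < infVal c (cgClosure (coverLP A b ∅ 0))) := by
  refine ⟨fun N hN => ⟨infVal_oneAggC_qMatrix (by omega), infVal_oneCGC_qMatrix (by omega),
    two_le_infVal_cgClosure_qMatrix (by omega), two_le_infVal_aggC_qMatrix (by omega)⟩,
    fun ε hε => ?_⟩
  obtain ⟨N, hN, hratio⟩ := exists_two_sub_mul_lt_two hε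
  have hratio' : ((2 - ε : ℝ) : EReal) * ((2 * N / (2 * N - 1) : ℝ) : EReal) < (2 : ℝ) :=
    EReal.coe_lt_coe_iff.2 hratio
  refine ⟨N, N, qMatrix N, fun _ => 2, fun i j => ?_, fun _ => zero_le_two,
    fun i j => ⟨if i = j then 1 else 2, ?_⟩, fun _ => ⟨2, by norm_num⟩, fun _ => 1,
    fun _ => zero_le_one, ?_, ?_⟩
  · simp only [qMatrix]; split_ifs <;> norm_num
  · simp only [qMatrix]; split_ifs <;> norm_num
  · rw [infVal_oneAggC_qMatrix (by omega)]
    exact hratio'.trans_le (two_le_infVal_aggC_qMatrix (by omega))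
  · rw [infVal_oneCGC_qMatrix (by omega)]
    exact hratio'.trans_le (two_le_infVal_cgClosure_qMatrix (by omega))
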